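/- The shuffle algebra ⊕_{d≥0} Q[x_1,...,x_d]^{S_d} with product (f*g) = Σ_{(d,e)-shuffles σ} f(x_{σ(1)},...,x_{σ(d)}) g(x_{σ(d+1)},...,x_{σ(d+e)}) is a polynomial (free commutative) algebra on the generators φ_0, φ_1, φ_2, ..., where φ_i ∈ Q[x] is x^i. -/

import Mathlib

open MvPolynomial

attribute [local instance] Classical.propDecidable

/-- `(d,e)`-shuffles. -/
def IsShuffle {d e : ℕ} (σ : Equiv.Perm (Fin (d + e))) : Prop :=
  StrictMono (fun i : Fin d => σ (Fin.castAdd e i)) ∧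
    StrictMono (fun j : Fin e => σ (Fin.natAdd d j))

/-- The CoHa product of the one-loop quiver:
`(f*g)(x_1,…,x_{d+e}) = Σ_σ f(x_{σ(1)},…,x_{σ(d)}) g(x_{σ(d+1)},…,x_{σ(d+e)})`,
the sum over `(d,e)`-shuffles. -/
noncomputable def loopMul {d e : ℕ} (f : MvPolynomial (Fin d) ℚ)
    (g : MvPolynomial (Fin e) ℚ) : MvPolynomial (Fin (d + e)) ℚ :=
  ∑ σ ∈ Finset.univ.filter (fun σ : Equiv.Perm (Fin (d + e)) => IsShuffle σ),
    rename (fun i : Fin d => σ (Fin.castAdd e i)) f *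
      rename (fun j : Fin e => σ (Fin.natAdd d j)) g

/-- `φ_i(x) = x^i ∈ ℚ[x]`. -/
noncomputable def phiF (i : ℕ) : MvPolynomial (Fin 1) ℚ := X 0 ^ i

/-- Iterated product `φ_{k_1} * ⋯ * φ_{k_d}`. -/
noncomputable def iterLoop : (d : ℕ) → (Fin d → ℕ) → MvPolynomial (Fin d) ℚ
  | 0, _ => 1
  | d + 1, k => loopMul (iterLoop d (fun i => k i.castSucc)) (phiF (k (Fin.last d)))

/-!
Summing over `(d,e)`-shuffles is summing over the `d`-element subsets `S` of the variables: the
shuffle feeds the variables in `S` to `f` and the others to `g`, each in increasing order. For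
symmetric `f` and `g` this order is irrelevant, so exchanging `S` with its complement gives
commutativity. Inserting `x^m` at every position shows inductively that
`φ_{k_1} * ⋯ * φ_{k_d} = ∑_{τ ∈ S_d} x^{k ∘ τ}`, a nonzero multiple of the monomial symmetric
polynomial of the partition `k`. These are linearly independent since distinct partitions
have disjoint supports, and they span: symmetrizing `p = ∑ c_m x^m` gives
`d! p = ∑ c_m ∑_τ x^{m ∘ τ}`.
-/

open Finset Equiv

section Antitone

variable {d : ℕ} {α : Type*}

lemma exists_perm_antitone_comp [LinearOrder α] (k : Fin d → α) :
    ∃ τ : Perm (Fin d), Antitone (k ∘ τ) :=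
  ⟨Tuple.sort (OrderDual.toDual ∘ k), Tuple.monotone_sort (OrderDual.toDual ∘ k)⟩

lemma eq_of_antitone_of_comp_perm_eq [PartialOrder α] {k k' : Fin d → α} (hk : Antitone k)
    (hk' : Antitone k') {τ : Perm (Fin d)} (h : k ∘ τ = k') : k = k' :=
  (Tuple.unique_antitone (σ := 1) hk (h ▸ hk')).trans h

end Antitone

namespace MvPolynomial

section SymmetrizedMonomial

variable {σ R : Type*} [Fintype σ] [CommSemiring R]

lemma rename_prod_X_pow (π : Perm σ) (v : σ → ℕ) :
    rename π (∏ i, X i ^ v i : MvPolynomial σ R) = ∏ i, X i ^ v (π.symm i) := by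
  simp only [map_prod, map_pow, rename_X]
  exact Fintype.prod_equiv π _ _ fun i => by simp

lemma monomial_one_eq_prod_X_pow (m : σ →₀ ℕ) :
    monomial m (1 : R) = ∏ i, X i ^ m i := by
  rw [monomial_eq, C_1, one_mul, Finsupp.prod_fintype _ _ (fun _ => pow_zero _)]

lemma coeff_prod_X_pow_univ (v w : σ → ℕ) :
    coeff (Finsupp.equivFunOnFinite.symm w) (∏ i, X i ^ v i : MvPolynomial σ R) =
      if v = w then 1 else 0 := by
  have h := monomial_one_eq_prod_X_pow (R := R) (Finsupp.equivFunOnFinite.symm v)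
  simp only [Finsupp.coe_equivFunOnFinite_symm] at h
  rw [← h, coeff_monomial]
  simp only [EmbeddingLike.apply_eq_iff_eq]

variable [DecidableEq σ]

noncomputable def symmetrizedMonomial (k : σ → ℕ) : MvPolynomial σ R :=
  ∑ τ : Perm σ, ∏ i, X i ^ k (τ i)

lemma coeff_symmetrizedMonomial (k v : σ → ℕ) :
    coeff (Finsupp.equivFunOnFinite.symm v) (symmetrizedMonomial k : MvPolynomial σ R) =
      #{τ : Perm σ | k ∘ τ = v} := by
  simp only [symmetrizedMonomial, coeff_sum, coeff_prod_X_pow_univ, sum_boole]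
  rfl

lemma symmetrizedMonomial_comp_perm (k : σ → ℕ) (π : Perm σ) :
    symmetrizedMonomial (R := R) (k ∘ π) = symmetrizedMonomial k :=
  Fintype.sum_equiv (Equiv.mulLeft π) _ _ fun _ => rfl

lemma isSymmetric_symmetrizedMonomial (k : σ → ℕ) :
    (symmetrizedMonomial k : MvPolynomial σ R).IsSymmetric := fun π => by
  simp only [symmetrizedMonomial, map_sum, rename_prod_X_pow]
  exact Fintype.sum_equiv (Equiv.mulRight π⁻¹) _ _ fun _ => rfl

lemma sum_rename_monomial_one (m : σ →₀ ℕ) :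
    ∑ π : Perm σ, rename π (monomial m (1 : R)) = symmetrizedMonomial m := by
  simp only [monomial_one_eq_prod_X_pow, rename_prod_X_pow]
  exact Fintype.sum_equiv (Equiv.inv _) _ _ fun _ => rfl

lemma IsSymmetric.card_perm_smul_eq {p : MvPolynomial σ R} (hp : p.IsSymmetric) :
    Fintype.card (Perm σ) • p = ∑ m ∈ p.support, coeff m p • symmetrizedMonomial m := by
  calc Fintype.card (Perm σ) • p = ∑ π : Perm σ, rename π p := by simp [hp _]
    _ = ∑ π : Perm σ, ∑ m ∈ p.support, coeff m p • rename π (monomial m 1) := by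
      refine sum_congr rfl fun π _ => ?_
      conv_lhs => rw [p.as_sum]
      simp only [map_sum, ← map_smul, smul_eq_mul, mul_one]
    _ = _ := by
      rw [sum_comm]
      simp only [← smul_sum, sum_rename_monomial_one]

lemma IsSymmetric.mem_span_symmetrizedMonomial {K : Type*} [Field K] [CharZero K]
    {p : MvPolynomial σ K} (hp : p.IsSymmetric) :
    p ∈ Submodule.span K (Set.range symmetrizedMonomial) := by
  have hcard : (Fintype.card (Perm σ) : K) ≠ 0 := Nat.cast_ne_zero.mpr Fintype.card_ne_zero
  rw [← Submodule.smul_mem_iff _ hcard, Nat.cast_smul_eq_nsmul, hp.card_perm_smul_eq]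
  exact Submodule.sum_mem _ fun m _ => Submodule.smul_mem _ _ (Submodule.subset_span ⟨m, rfl⟩)

end SymmetrizedMonomial

lemma IsSymmetric.rename_eq_of_range_eq {σ τ R : Type*} [CommSemiring R]
    {f : MvPolynomial σ R} (hf : f.IsSymmetric) {u v : σ → τ} (hu : Function.Injective u)
    (hv : Function.Injective v) (h : Set.range u = Set.range v) : rename u f = rename v f := by
  let π : Perm σ :=
    (Equiv.ofInjective v hv).trans ((Equiv.setCongr h).symm.trans (Equiv.ofInjective u hu).symm)
  have hπ : u ∘ π = v := by
    ext x
    simp [π, apply_ofInjective_symm]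
  rw [← hπ, ← rename_rename, hf π]

section Partitions

variable {d : ℕ} {K : Type*} [Field K] [CharZero K]

theorem span_symmetrizedMonomial_antitone :
    Submodule.span K
        (Set.range fun k : {k : Fin d → ℕ // Antitone k} => symmetrizedMonomial k.1) =
      (symmetricSubalgebra (Fin d) K).toSubmodule := by
  refine le_antisymm ?_ fun p hp => ?_
  · rw [Submodule.span_le]
    rintro _ ⟨k, rfl⟩
    exact isSymmetric_symmetrizedMonomial k.1
  · refine Submodule.span_le.mpr ?_
      ((mem_symmetricSubalgebra p).mp hp).mem_span_symmetrizedMonomial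
    rintro _ ⟨k, rfl⟩
    obtain ⟨τ, hτ⟩ := exists_perm_antitone_comp k
    exact Submodule.subset_span ⟨⟨k ∘ τ, hτ⟩, symmetrizedMonomial_comp_perm k τ⟩

theorem linearIndependent_symmetrizedMonomial_antitone :
    LinearIndependent K fun k : {k : Fin d → ℕ // Antitone k} =>
      (symmetrizedMonomial k.1 : MvPolynomial (Fin d) K) := by
  let stab : {k : Fin d → ℕ // Antitone k} → K := fun k =>
    #{τ : Perm (Fin d) | k.1 ∘ τ = k.1}
  refine .of_pairwise_dual_eq_zero_one _
    (fun k => (stab k)⁻¹ • lcoeff K (Finsupp.equivFunOnFinite.symm k.1)) (fun k k' hne => ?_)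
    fun k => ?_
  · have hempty : ({τ | k'.1 ∘ τ = k.1} : Finset (Perm (Fin d))) = ∅ :=
      filter_eq_empty_iff.mpr fun τ _ hτ =>
        hne (Subtype.ext (eq_of_antitone_of_comp_perm_eq k'.2 k.2 hτ)).symm
    simp only [LinearMap.smul_apply, lcoeff_apply, coeff_symmetrizedMonomial, hempty, card_empty,
      Nat.cast_zero, smul_zero]
  · have hstab : stab k ≠ 0 :=
      Nat.cast_ne_zero.mpr (card_ne_zero_of_mem (mem_filter.mpr ⟨mem_univ 1, rfl⟩))
    simp only [LinearMap.smul_apply, lcoeff_apply, coeff_symmetrizedMonomial, smul_eq_mul]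
    exact inv_mul_cancel₀ hstab

end Partitions

end MvPolynomial

section Shuffle

variable {d e : ℕ}

lemma card_compl_of_card_eq {S : Finset (Fin (d + e))} (hS : #S = d) : #Sᶜ = e := by
  rw [card_compl, hS, Fintype.card_fin, Nat.add_sub_cancel_left]

noncomputable def shuffleOfFinset (S : {S : Finset (Fin (d + e)) // #S = d}) :
    Perm (Fin (d + e)) :=
  finSumFinEquiv.symm.trans (finSumEquivOfFinset S.2 (card_compl_of_card_eq S.2))

@[simp]
lemma shuffleOfFinset_castAdd (S : {S : Finset (Fin (d + e)) // #S = d}) (i : Fin d) :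
    shuffleOfFinset S (Fin.castAdd e i) = S.1.orderEmbOfFin S.2 i := by
  simp [shuffleOfFinset]

@[simp]
lemma shuffleOfFinset_natAdd (S : {S : Finset (Fin (d + e)) // #S = d}) (j : Fin e) :
    shuffleOfFinset S (Fin.natAdd d j) = S.1ᶜ.orderEmbOfFin (card_compl_of_card_eq S.2) j := by
  simp [shuffleOfFinset]

lemma isShuffle_shuffleOfFinset (S : {S : Finset (Fin (d + e)) // #S = d}) :
    IsShuffle (shuffleOfFinset S) := by
  constructor <;> simpa only [shuffleOfFinset_castAdd, shuffleOfFinset_natAdd] using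
    (orderEmbOfFin _ _).strictMono

lemma IsShuffle.card_image {σ : Perm (Fin (d + e))} (hσ : IsShuffle σ) :
    #(univ.image fun i => σ (Fin.castAdd e i)) = d := by
  rw [card_image_of_injective _ hσ.1.injective, card_univ, Fintype.card_fin]

lemma IsShuffle.shuffleOfFinset_image {σ : Perm (Fin (d + e))} (hσ : IsShuffle σ) :
    shuffleOfFinset ⟨_, hσ.card_image⟩ = σ := by
  ext x
  refine Fin.addCases (fun i => ?_) (fun j => ?_) x
  · rw [shuffleOfFinset_castAdd,
      ← orderEmbOfFin_unique _ (fun i => mem_image_of_mem _ (mem_univ i)) hσ.1]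
  · rw [shuffleOfFinset_natAdd, ← orderEmbOfFin_unique _ (fun j => ?_) hσ.2]
    simp only [mem_compl, mem_image, mem_univ, true_and, σ.injective.eq_iff, not_exists]
    intro i h
    rw [Fin.ext_iff, Fin.val_castAdd, Fin.val_natAdd] at h
    omega

noncomputable def shuffleEquivFinset :
    {σ : Perm (Fin (d + e)) // IsShuffle σ} ≃ {S : Finset (Fin (d + e)) // #S = d} where
  toFun σ := ⟨_, σ.2.card_image⟩
  invFun S := ⟨shuffleOfFinset S, isShuffle_shuffleOfFinset S⟩
  left_inv σ := Subtype.ext σ.2.shuffleOfFinset_image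
  right_inv S := by simp

lemma loopMul_eq_sum_finset (f : MvPolynomial (Fin d) ℚ) (g : MvPolynomial (Fin e) ℚ) :
    loopMul f g = ∑ S : {S : Finset (Fin (d + e)) // #S = d},
      rename (S.1.orderEmbOfFin S.2) f *
        rename (S.1ᶜ.orderEmbOfFin (card_compl_of_card_eq S.2)) g := by
  rw [loopMul, sum_subtype _ (fun σ => by rw [mem_filter, and_iff_right (mem_univ σ)])]
  refine Fintype.sum_equiv shuffleEquivFinset _ _ fun σ => ?_
  conv_lhs => rw [← σ.2.shuffleOfFinset_image]
  simp only [shuffleOfFinset_castAdd, shuffleOfFinset_natAdd]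
  rfl

noncomputable def finsetFlipCompl :
    {T : Finset (Fin (e + d)) // #T = e} ≃ {S : Finset (Fin (d + e)) // #S = d} where
  toFun T := ⟨(T.1.map finAddFlip.toEmbedding)ᶜ, by
    rw [card_compl, card_map, T.2, Fintype.card_fin, Nat.add_sub_cancel]⟩
  invFun S := ⟨(S.1.map finAddFlip.symm.toEmbedding)ᶜ, by
    rw [card_compl, card_map, S.2, Fintype.card_fin, Nat.add_sub_cancel]⟩
  left_inv T := by ext; simp
  right_inv S := by ext; simp

theorem loopMul_comm {f : MvPolynomial (Fin d) ℚ} {g : MvPolynomial (Fin e) ℚ}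
    (hf : f.IsSymmetric) (hg : g.IsSymmetric) :
    loopMul f g = rename (finAddFlip : Fin (e + d) ≃ Fin (d + e)) (loopMul g f) := by
  rw [loopMul_eq_sum_finset f g, loopMul_eq_sum_finset g f, map_sum]
  refine (Fintype.sum_equiv finsetFlipCompl _ _ fun T => ?_).symm
  rw [map_mul, rename_rename, rename_rename, mul_comm]
  congr 1
  all_goals
    refine IsSymmetric.rename_eq_of_range_eq (by assumption)
      (finAddFlip.injective.comp (orderEmbOfFin _ _).injective) (orderEmbOfFin _ _).injective ?_
    rw [Set.range_comp, range_orderEmbOfFin, range_orderEmbOfFin]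
    ext x
    simp [finsetFlipCompl]

end Shuffle

section Generators

variable {d : ℕ}

lemma loopMul_phiF (f : MvPolynomial (Fin d) ℚ) (m : ℕ) :
    loopMul f (phiF m) = ∑ j : Fin (d + 1), rename j.succAbove f * X j ^ m := by
  rw [loopMul_eq_sum_finset]
  let β : Fin (d + 1) → {S : Finset (Fin (d + 1)) // #S = d} := fun j =>
    ⟨{j}ᶜ, by rw [card_compl, card_singleton, Fintype.card_fin, Nat.add_sub_cancel]⟩
  have hβ : Function.Bijective β := by
    refine ⟨fun i j hij => ?_, fun S => ?_⟩
    · simpa [β] using congrArg Subtype.val hij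
    · obtain ⟨j, hj⟩ := card_eq_one.mp (card_compl_of_card_eq S.2)
      exact ⟨j, Subtype.ext (by simp [β, ← hj])⟩
  refine (Fintype.sum_bijective β hβ _ _ fun j => ?_).symm
  have hsucc : ⇑((β j).1.orderEmbOfFin (β j).2) = j.succAbove :=
    (orderEmbOfFin_unique _ (fun i => by simp [β, Fin.succAbove_ne])
      (Fin.strictMono_succAbove j)).symm
  have hj : (β j).1ᶜ.orderEmbOfFin (card_compl_of_card_eq (β j).2) 0 = j := by
    simpa only [β, compl_compl, mem_singleton] using
      orderEmbOfFin_mem _ (card_compl_of_card_eq (β j).2) 0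
  simp only [β, hsucc, phiF, map_pow, rename_X, hj]

def insertPerm (j : Fin (d + 1)) (σ : Perm (Fin d)) : Perm (Fin (d + 1)) :=
  (finSuccEquiv' j).trans ((Equiv.optionCongr σ).trans (finSuccEquiv' (Fin.last d)).symm)

@[simp]
lemma insertPerm_apply_self (j : Fin (d + 1)) (σ : Perm (Fin d)) :
    insertPerm j σ j = Fin.last d := by
  simp [insertPerm]

@[simp]
lemma insertPerm_apply_succAbove (j : Fin (d + 1)) (σ : Perm (Fin d)) (i : Fin d) :
    insertPerm j σ (j.succAbove i) = (σ i).castSucc := by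
  simp [insertPerm, Fin.succAbove_last]

lemma insertPerm_bijective :
    Function.Bijective fun p : Fin (d + 1) × Perm (Fin d) => insertPerm p.1 p.2 := by
  refine (Fintype.bijective_iff_injective_and_card _).mpr ⟨?_, ?_⟩
  · rintro ⟨j, σ⟩ ⟨j', σ'⟩ h
    simp only at h
    obtain rfl : j = j' := (insertPerm j' σ').injective <| by
      rw [insertPerm_apply_self, ← DFunLike.congr_fun h j, insertPerm_apply_self]
    obtain rfl : σ = σ' := Equiv.ext fun i => Fin.castSucc_injective d <| by
      rw [← insertPerm_apply_succAbove, h, insertPerm_apply_succAbove]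
    rfl
  · simp [Fintype.card_perm, Nat.factorial_succ]

theorem iterLoop_eq_symmetrizedMonomial (k : Fin d → ℕ) :
    iterLoop d k = symmetrizedMonomial k := by
  induction d with
  | zero => simp [iterLoop, symmetrizedMonomial]
  | succ d ih =>
    rw [iterLoop, ih, loopMul_phiF]
    refine Eq.trans ?_ (Fintype.sum_bijective _ insertPerm_bijective
      (fun p => ∏ x, X x ^ k (insertPerm p.1 p.2 x)) _ fun _ => rfl)
    simp only [Fintype.sum_prod_type, symmetrizedMonomial, map_sum, sum_mul, map_prod, map_pow,
      rename_X]
    refine sum_congr rfl fun j _ => sum_congr rfl fun σ _ => ?_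
    rw [Fin.prod_univ_succAbove _ j, mul_comm]
    simp

end Generators

/-- the shuffle algebra `⊕_d ℚ[x_1,…,x_d]^{S_d}` of the one-loop
quiver is a polynomial (free commutative) algebra on the generators
`φ_0, φ_1, φ_2, …`: the product is commutative (up to the identification
`Fin (e+d) ≃ Fin (d+e)` of variables), and the products `φ_{k_1} * ⋯ * φ_{k_d}`
over partitions `k_1 ≥ ⋯ ≥ k_d` form a `ℚ`-basis of the degree-`d` component
`ℚ[x_1,…,x_d]^{S_d}`. -/
theorem coha_loop_polynomial_algebra :
    (∀ (d e : ℕ) (f : MvPolynomial (Fin d) ℚ) (g : MvPolynomial (Fin e) ℚ),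
      f.IsSymmetric → g.IsSymmetric →
      loopMul f g = rename (⇑(finAddFlip : Fin (e + d) ≃ Fin (d + e))) (loopMul g f)) ∧
    (∀ d : ℕ,
      LinearIndependent ℚ
        (fun k : {k : Fin d → ℕ // Antitone k} => iterLoop d k.1) ∧
      Submodule.span ℚ
          (Set.range fun k : {k : Fin d → ℕ // Antitone k} => iterLoop d k.1) =
        (symmetricSubalgebra (Fin d) ℚ).toSubmodule) := by
  refine ⟨fun _ _ _ _ hf hg => loopMul_comm hf hg, fun d => ?_⟩
  simp only [iterLoop_eq_symmetrizedMonomial]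
  exact ⟨linearIndependent_symmetrizedMonomial_antitone, span_symmetrizedMonomial_antitone⟩
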